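/- arXiv:2512.02808 — 3 statements merged into one kernel-verified Lean document; each statement's English description precedes it below -/
import Mathlib

section
/- (Soundness of the two-prover oracle-transcript game) Fix a finite index set of oracle queries {1,…,k}, formulas φ : Fin k → (W → Prop) (each query's satisfaction relation over witnesses W), an acceptance predicate Acc : (Fin k → Bool) → Prop on oracle-answer vectors, and the 'correct answers' a* : Fin k → Bool defined by a* i = true ↔ ∃ w, φ i w. Define Q(Y, Z) where Y = (a : Fin k → Bool, wit : ∀ i, a i = true → W) and Z = (j : Fin k, w' : W), by: Q holds iff Acc a, and for every i with a i = true, φ i (wit i _), and (a j = false → ¬ φ j w'). Then: if there exists Y such that Q(Y, Z) holds for all Z, then the answer vector a in any such Y equals the correct answers a* and Acc a* holds. -/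
/-!
A winning first player has committed, for every query answered `true`, to a witness that
Player 2 cannot refute, and for every query answered `false` Player 2 may exhibit any
candidate witness, which must then fail. Hence each answer is `true` exactly when the query
is satisfiable, i.e. the answers are the correct ones, and acceptance, which holds against
every challenge (there is one, since `Fin k` and `W` are nonempty), holds for them.
-/

theorem eq_true_iff_exists_of_witness_of_refutation {ι W : Type*} {φ : ι → W → Prop}
    {a : ι → Bool} (wit : ∀ i, a i = true → W) (hwit : ∀ i (h : a i = true), φ i (wit i h))
    (hrefute : ∀ i w, a i = false → ¬ φ i w) (i : ι) :
    a i = true ↔ ∃ w, φ i w := by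
  refine ⟨fun h => ⟨wit i h, hwit i h⟩, fun ⟨w, hw⟩ => ?_⟩
  by_contra h
  exact hrefute i w (Bool.eq_false_iff.mpr h) hw

theorem oracle_game_soundness_general {k : ℕ} {W : Type*} [Nonempty W] (hk : 0 < k)
    (φ : Fin k → W → Prop) (Acc : (Fin k → Bool) → Prop)
    (astar : Fin k → Bool) (hastar : ∀ i, astar i = true ↔ ∃ w, φ i w)
    (Q : ((a : Fin k → Bool) × (∀ i, a i = true → W)) → (Fin k × W) → Prop)
    (hQ : ∀ Y Z, Q Y Z ↔
      Acc Y.1 ∧ (∀ i (h : Y.1 i = true), φ i (Y.2 i h)) ∧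
        (Y.1 Z.1 = false → ¬ φ Z.1 Z.2)) :
    ∀ Y, (∀ Z, Q Y Z) → Y.1 = astar ∧ Acc astar := by
  intro Y hY
  have hwin Z := (hQ Y Z).mp (hY Z)
  obtain ⟨hacc, hwit, -⟩ := hwin (⟨0, hk⟩, Classical.arbitrary W)
  have hrefute i w : Y.1 i = false → ¬ φ i w := (hwin (i, w)).2.2
  have hanswers : Y.1 = astar := funext fun i => Bool.eq_iff_iff.mpr <|
    (eq_true_iff_exists_of_witness_of_refutation Y.2 hwit hrefute i).trans (hastar i).symm
  exact ⟨hanswers, hanswers ▸ hacc⟩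

theorem oracle_game_soundness {k : ℕ} {W : Type*} [Nonempty W] (hk : 0 < k)
    (φ : Fin k → W → Prop) (Acc : (Fin k → Bool) → Prop)
    (astar : Fin k → Bool) (hastar : ∀ i, astar i = true ↔ ∃ w, φ i w)
    (Q : ((a : Fin k → Bool) × (∀ i, a i = true → W)) → (Fin k × W) → Prop)
    (hQ : ∀ Y Z, Q Y Z ↔
      Acc Y.1 ∧ (∀ i (h : Y.1 i = true), φ i (Y.2 i h)) ∧
        (Y.1 Z.1 = false → ¬ φ Z.1 Z.2))
    (hwin : ∃ Y, ∀ Z, Q Y Z) :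
    ∀ Y, (∀ Z, Q Y Z) → Y.1 = astar ∧ Acc astar :=
  oracle_game_soundness_general hk φ Acc astar hastar Q hQ
end

section
/- (The constructed game predicate satisfies the S₂ condition when the underlying relation is total) With φ, Acc, a*, Q as in the oracle-transcript game, assume Acc a* holds (totality of the underlying TFNP^NP relation on this input). Then the game Q satisfies the first S₂ alternative: ∃ Y, ∀ Z, Q(Y, Z); and in particular Q satisfies the S₂ condition (∃ Y, ∀ Z, Q(Y,Z)) ∨ (∃ Z, ∀ Y, ¬Q(Y,Z)). -/
/-! The prover answers every oracle query truthfully, i.e. plays the true answer vector `a*`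
together with witnesses for its `true` entries. Such a transcript is accepted because `Acc a*`
holds, and the challenger can only refute a `false` answer by exhibiting a witness for it, which
does not exist precisely because `a*` is correct. -/

section HonestTranscript

variable {k : ℕ} {W : Type*} (φ : Fin k → W → Prop)

noncomputable def honestWitnesses (a : Fin k → Bool) (ha : ∀ i, a i = true → ∃ w, φ i w) :
    ∀ i, a i = true → W :=
  fun i h => (ha i h).choose

theorem honestWitnesses_spec (a : Fin k → Bool) (ha : ∀ i, a i = true → ∃ w, φ i w)
    (i : Fin k) (h : a i = true) : φ i (honestWitnesses φ a ha i h) :=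
  (ha i h).choose_spec

theorem not_witness_of_eq_false {a : Fin k → Bool} (ha : ∀ i, a i = true ↔ ∃ w, φ i w)
    {j : Fin k} (hj : a j = false) (w : W) : ¬ φ j w := fun hw => by
  simp [(ha j).mpr ⟨w, hw⟩] at hj

end HonestTranscript

theorem oracle_game_s2 {k : ℕ} {W : Type*}
    (φ : Fin k → W → Prop) (Acc : (Fin k → Bool) → Prop)
    (astar : Fin k → Bool) (hastar : ∀ i, astar i = true ↔ ∃ w, φ i w)
    (Q : ((a : Fin k → Bool) × (∀ i, a i = true → W)) → (Fin k × W) → Prop)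
    (hQ : ∀ Y Z, Q Y Z ↔
      Acc Y.1 ∧ (∀ i (h : Y.1 i = true), φ i (Y.2 i h)) ∧
        (Y.1 Z.1 = false → ¬ φ Z.1 Z.2))
    (hAcc : Acc astar) :
    (∃ Y, ∀ Z, Q Y Z) ∧ ((∃ Y, ∀ Z, Q Y Z) ∨ (∃ Z, ∀ Y, ¬ Q Y Z)) := by
  have hwit : ∀ i, astar i = true → ∃ w, φ i w := fun i => (hastar i).mp
  have honest_wins : ∃ Y, ∀ Z, Q Y Z :=
    ⟨⟨astar, honestWitnesses φ astar hwit⟩, fun Z => (hQ _ Z).mpr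
      ⟨hAcc, honestWitnesses_spec φ astar hwit,
        fun hj => not_witness_of_eq_false φ hastar hj Z.2⟩⟩
  exact ⟨honest_wins, Or.inl honest_wins⟩
end

section
/- (Reduction preserves solutions) Consider a total relation R : X → Y → Prop where for each x the membership R x y is characterized via the oracle-transcript machinery: there are φₓ : Fin k → (W → Prop) and Accₓ,ᵧ : (Fin k → Bool) → Prop such that R x y ↔ Accₓ,ᵧ a*ₓ where a*ₓ i = true ↔ ∃ w, φₓ i w. Then any winning Player-1 strategy in the game Qₓ (whose first component includes a candidate y, answers a, and witnesses wit) yields y with R x y. -/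
/-! A winning first move must answer every oracle query correctly: a `true` answer is certified by
its witness, and a `false` answer survives every challenge `(j, w')` only if query `j` has no
witness at all. So the claimed answer vector is the true one `a*ₓ`, and the acceptance condition it
satisfies is exactly the characterization of `R x y`. -/

theorem eq_true_iff_exists_of_witnessed_of_refuted {ι W : Type*} {φ : ι → W → Prop} {a : ι → Bool}
    (wit : ∀ i, a i = true → W) (hwit : ∀ i h, φ i (wit i h))
    (hrefute : ∀ i w, a i = false → ¬ φ i w) (i : ι) :
    a i = true ↔ ∃ w, φ i w := by
  refine ⟨fun h => ⟨wit i h, hwit i h⟩, fun ⟨w, hw⟩ => ?_⟩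
  by_contra h
  exact hrefute i w (Bool.eq_false_iff.2 h) hw

theorem eq_of_witnessed_of_refuted {ι W : Type*} {φ : ι → W → Prop} {a astar : ι → Bool}
    (hastar : ∀ i, astar i = true ↔ ∃ w, φ i w)
    (wit : ∀ i, a i = true → W) (hwit : ∀ i h, φ i (wit i h))
    (hrefute : ∀ i w, a i = false → ¬ φ i w) :
    a = astar :=
  funext fun i => Bool.eq_iff_iff.2 <|
    (eq_true_iff_exists_of_witnessed_of_refuted wit hwit hrefute i).trans (hastar i).symm

theorem reduction_preserves_solutions_general {X Y W : Type*} [Nonempty W] {k : ℕ} (hk : 0 < k)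
    (R : X → Y → Prop)
    (φ : X → Fin k → W → Prop) (Acc : X → Y → (Fin k → Bool) → Prop)
    (astar : X → Fin k → Bool)
    (hastar : ∀ x i, astar x i = true ↔ ∃ w, φ x i w)
    (hchar : ∀ x y, R x y ↔ Acc x y (astar x))
    (Q : X → (Y × (a : Fin k → Bool) × (∀ i, a i = true → W)) → (Fin k × W) → Prop)
    (hQ : ∀ x P1 Z, Q x P1 Z ↔
      Acc x P1.1 P1.2.1 ∧ (∀ i (h : P1.2.1 i = true), φ x i (P1.2.2 i h)) ∧
        (P1.2.1 Z.1 = false → ¬ φ x Z.1 Z.2)) :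
    ∀ x P1, (∀ Z, Q x P1 Z) → R x P1.1 := by
  rintro x ⟨y, a, wit⟩ hwin
  simp only [hQ] at hwin
  obtain ⟨w⟩ := ‹Nonempty W›
  have ha : a = astar x :=
    eq_of_witnessed_of_refuted (hastar x) wit (hwin (⟨0, hk⟩, w)).2.1
      fun i w' => (hwin (i, w')).2.2
  rw [hchar, ← ha]
  exact (hwin (⟨0, hk⟩, w)).1

theorem reduction_preserves_solutions {X Y W : Type*} [Nonempty W] {k : ℕ} (hk : 0 < k)
    (R : X → Y → Prop) (hR : ∀ x, ∃ y, R x y)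
    (φ : X → Fin k → W → Prop) (Acc : X → Y → (Fin k → Bool) → Prop)
    (astar : X → Fin k → Bool)
    (hastar : ∀ x i, astar x i = true ↔ ∃ w, φ x i w)
    (hchar : ∀ x y, R x y ↔ Acc x y (astar x))
    (Q : X → (Y × (a : Fin k → Bool) × (∀ i, a i = true → W)) → (Fin k × W) → Prop)
    (hQ : ∀ x P1 Z, Q x P1 Z ↔
      Acc x P1.1 P1.2.1 ∧ (∀ i (h : P1.2.1 i = true), φ x i (P1.2.2 i h)) ∧
        (P1.2.1 Z.1 = false → ¬ φ x Z.1 Z.2)) :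
    ∀ x P1, (∀ Z, Q x P1 Z) → R x P1.1 :=
  reduction_preserves_solutions_general hk R φ Acc astar hastar hchar Q hQ
end
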